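/- arXiv:2011.04067 — 2 statements merged into one kernel-verified Lean document; each statement's English description precedes it below -/
import Mathlib

section
/- Let (T, C, X) be random elements with T, C ≥ 0, T and C conditionally independent given X, S_c(t, X) = P(C ≥ t | X), and suppose the conditional survival function P(T ≥ t | X) equals S(t, βᵀX), a measurable function of the index βᵀX alone. Let X_l be an integrable subvector of X. Then for every t, E[ X_l · I(T ≥ t) · I(C ≥ t) | βᵀX ] = S(t, βᵀX) · E[ X_l · S_c(t, X) | βᵀX ] almost surely; in particular (taking X_l ≡ 1), E[ I(T ≥ t) I(C ≥ t) | βᵀX ] = S(t, βᵀX) · E[ S_c(t, X) | βᵀX ] almost surely. -/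
open MeasureTheory Set

/-! Condition on `X` first and then on the coarser `σ(βᵀX)`. Given `X`, the factor `X_l` pulls
out and conditional independence splits `E[I(T ≥ t) I(C ≥ t) | X]` into
`S(t, βᵀX) · S_c(t, X)`; the first factor is `σ(βᵀX)`-measurable, so it pulls out of the outer
conditional expectation as well. -/

def sigmaGen {Ω α : Type*} [MeasurableSpace α] (X : Ω → α) : MeasurableSpace Ω :=
  MeasurableSpace.comap X inferInstance

noncomputable def cE {Ω : Type*} [MeasurableSpace Ω] {E : Type*} [NormedAddCommGroup E]
    [NormedSpace ℝ E] [CompleteSpace E]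
    (μ : Measure Ω) (m : MeasurableSpace Ω) (f : Ω → E) : Ω → E :=
  μ[f | m]

section CondExp

variable {Ω : Type*} {m₁ m₂ mΩ : MeasurableSpace Ω} {μ : Measure Ω}

theorem condExp_eq_mul_condExp_of_condExp_eq_mul (hm₁₂ : m₁ ≤ m₂) (hm₂ : m₂ ≤ mΩ)
    [SigmaFinite (μ.trim hm₂)] {f g σ : Ω → ℝ} (hσ : StronglyMeasurable[m₁] σ)
    (hσg : Integrable (σ * g) μ) (hg : Integrable g μ) (hf : μ[f | m₂] =ᵐ[μ] σ * g) :
    μ[f | m₁] =ᵐ[μ] σ * μ[g | m₁] :=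
  calc μ[f | m₁] =ᵐ[μ] μ[μ[f | m₂] | m₁] := (condExp_condExp_of_le hm₁₂ hm₂).symm
    _ =ᵐ[μ] μ[σ * g | m₁] := condExp_congr_ae hf
    _ =ᵐ[μ] σ * μ[g | m₁] := condExp_mul_of_stronglyMeasurable_left hσ hσg hg

theorem condExp_mul_mul_eq_of_condExp_mul_eq_mul (hm₁₂ : m₁ ≤ m₂) (hm₂ : m₂ ≤ mΩ)
    [IsFiniteMeasure μ] {f g h σ : Ω → ℝ} {c : ℝ}
    (hf : AEStronglyMeasurable f μ) (hg : AEStronglyMeasurable g μ)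
    (hf_bdd : ∀ᵐ ω ∂μ, |f ω| ≤ c) (hg_bdd : ∀ᵐ ω ∂μ, |g ω| ≤ c)
    (hfg : μ[f * g | m₂] =ᵐ[μ] μ[f | m₂] * μ[g | m₂])
    (hσ : StronglyMeasurable[m₁] σ) (hfσ : μ[f | m₂] =ᵐ[μ] σ)
    (hh : StronglyMeasurable[m₂] h) (hh_int : Integrable h μ) :
    μ[h * f * g | m₁] =ᵐ[μ] σ * μ[h * μ[g | m₂] | m₁] := by
  have hf_norm : ∀ᵐ ω ∂μ, ‖f ω‖ ≤ c := by simpa only [Real.norm_eq_abs] using hf_bdd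
  have hg_norm : ∀ᵐ ω ∂μ, ‖g ω‖ ≤ c := by simpa only [Real.norm_eq_abs] using hg_bdd
  have hg_condExp_norm : ∀ᵐ ω ∂μ, ‖μ[g | m₂] ω‖ ≤ c := by
    simpa only [Real.norm_eq_abs] using ae_bdd_abs_condExp_of_ae_bdd_abs hg_bdd
  have hg_int : Integrable g μ := .of_bound hg c hg_norm
  have hfg_int : Integrable (f * g) μ := hg_int.bdd_mul hf hf_norm
  have hhfg_int : Integrable (h * (f * g)) μ := by
    rw [← mul_assoc]
    exact (hh_int.mul_bdd hf hf_norm).mul_bdd hg hg_norm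
  have hhg_int : Integrable (h * μ[g | m₂]) μ :=
    hh_int.mul_bdd integrable_condExp.aestronglyMeasurable hg_condExp_norm
  have h_inner : μ[h * f * g | m₂] =ᵐ[μ] σ * (h * μ[g | m₂]) := by
    rw [mul_assoc]
    filter_upwards [condExp_mul_of_stronglyMeasurable_left hh hhfg_int hfg_int, hfg, hfσ]
      with ω h_pull h_indep h_σ
    simp only [Pi.mul_apply] at h_pull h_indep ⊢
    rw [h_pull, h_indep, h_σ]
    ring
  exact condExp_eq_mul_condExp_of_condExp_eq_mul hm₁₂ hm₂ hσ
    (integrable_condExp.congr h_inner) hhg_int h_inner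

end CondExp

theorem abs_ite_one_zero_le_one (p : Prop) [Decidable p] : |(if p then (1 : ℝ) else 0)| ≤ 1 := by
  split_ifs <;> simp

theorem sigmaGen_comp_le {Ω α β : Type*} [MeasurableSpace α] [MeasurableSpace β]
    {X : Ω → α} {φ : α → β} (hφ : Measurable φ) : sigmaGen (φ ∘ X) ≤ sigmaGen X :=
  (hφ.comp (comap_measurable X)).comap_le

theorem condexp_factorization_through_index_general
    {Ω : Type*} [MeasurableSpace Ω] (μ : Measure Ω) [IsProbabilityMeasure μ]
    {p d : ℕ} (X : Ω → Fin p → ℝ) (T C : Ω → ℝ)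
    (β : Matrix (Fin p) (Fin d) ℝ)
    (hX : Measurable X) (hT : Measurable T) (hC : Measurable C)
    -- the index V = βᵀX
    (V : Ω → Fin d → ℝ) (hV : ∀ ω, V ω = Matrix.vecMul (X ω) β)
    -- conditional independence of T and C given X
    (hTC : ∀ s t : ℝ,
      cE μ (sigmaGen X)
          (fun ω => (if s ≤ T ω then (1:ℝ) else 0) * (if t ≤ C ω then (1:ℝ) else 0))
        =ᵐ[μ]
      fun ω =>
        cE μ (sigmaGen X) (fun ω' => if s ≤ T ω' then (1:ℝ) else 0) ω *
        cE μ (sigmaGen X) (fun ω' => if t ≤ C ω' then (1:ℝ) else 0) ω)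
    -- the conditional survival of T given X depends on X only through βᵀX
    (S : ℝ → (Fin d → ℝ) → ℝ) (hSmeas : Measurable (Function.uncurry S))
    (hS : ∀ t : ℝ,
      cE μ (sigmaGen X) (fun ω => if t ≤ T ω then (1:ℝ) else 0)
        =ᵐ[μ] fun ω => S t (V ω))
    -- an integrable subvector component of X
    (Xl : Ω → ℝ) (hXlmeas : Measurable[sigmaGen X] Xl) (hXlint : Integrable Xl μ) :
    ∀ t : ℝ,
      (cE μ (sigmaGen V)
          (fun ω => Xl ω * (if t ≤ T ω then (1:ℝ) else 0) * (if t ≤ C ω then (1:ℝ) else 0))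
        =ᵐ[μ]
       fun ω => S t (V ω) *
         cE μ (sigmaGen V)
           (fun ω' => Xl ω' * cE μ (sigmaGen X) (fun ω'' => if t ≤ C ω'' then (1:ℝ) else 0) ω')
           ω)
      ∧
      (cE μ (sigmaGen V)
          (fun ω => (if t ≤ T ω then (1:ℝ) else 0) * (if t ≤ C ω then (1:ℝ) else 0))
        =ᵐ[μ]
       fun ω => S t (V ω) *
         cE μ (sigmaGen V)
           (fun ω' => cE μ (sigmaGen X) (fun ω'' => if t ≤ C ω'' then (1:ℝ) else 0) ω')
           ω) := by
  intro t
  have hVX : sigmaGen V ≤ sigmaGen X := by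
    rw [show V = (Matrix.vecMul · β) ∘ X from funext hV]
    exact sigmaGen_comp_le (continuous_id.matrix_vecMul continuous_const).measurable
  have hσ : StronglyMeasurable[sigmaGen V] fun ω => S t (V ω) :=
    (hSmeas.comp (measurable_const.prodMk (comap_measurable V))).stronglyMeasurable
  have h_ind {Y : Ω → ℝ} (hY : Measurable Y) :
      AEStronglyMeasurable (fun ω => if t ≤ Y ω then (1 : ℝ) else 0) μ :=
    (Measurable.ite (measurableSet_le measurable_const hY) measurable_const
      measurable_const).aestronglyMeasurable
  have h_factor {h : Ω → ℝ} (hh : StronglyMeasurable[sigmaGen X] h) (hh_int : Integrable h μ) :=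
    condExp_mul_mul_eq_of_condExp_mul_eq_mul hVX hX.comap_le (h_ind hT) (h_ind hC)
      (.of_forall fun _ => abs_ite_one_zero_le_one _)
      (.of_forall fun _ => abs_ite_one_zero_le_one _) (hTC t t) hσ (hS t) hh hh_int
  refine ⟨h_factor hXlmeas.stronglyMeasurable hXlint, ?_⟩
  have := h_factor (h := 1) stronglyMeasurable_one (integrable_const 1)
  rw [one_mul, one_mul] at this
  exact this

/-- With `T ⊥ C | X`, `S_c(t, X) = P(C ≥ t | X)`, and
`P(T ≥ t | X) = S(t, βᵀX)` a measurable function of the index `βᵀX` alone, for any integrable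
(σ(X)-measurable) subvector component `X_l` of `X` and every `t`:
`E[X_l · I(T ≥ t) · I(C ≥ t) | βᵀX] = S(t, βᵀX) · E[X_l · S_c(t, X) | βᵀX]` a.s.;
in particular (taking `X_l ≡ 1`),
`E[I(T ≥ t) I(C ≥ t) | βᵀX] = S(t, βᵀX) · E[S_c(t, X) | βᵀX]` a.s. -/
theorem condexp_factorization_through_index
    {Ω : Type*} [MeasurableSpace Ω] (μ : Measure Ω) [IsProbabilityMeasure μ]
    {p d : ℕ} (X : Ω → Fin p → ℝ) (T C : Ω → ℝ)
    (β : Matrix (Fin p) (Fin d) ℝ)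
    (hX : Measurable X) (hT : Measurable T) (hC : Measurable C)
    (hTnn : ∀ ω, 0 ≤ T ω) (hCnn : ∀ ω, 0 ≤ C ω)
    -- the index V = βᵀX
    (V : Ω → Fin d → ℝ) (hV : ∀ ω, V ω = Matrix.vecMul (X ω) β)
    (hVmeas : Measurable V)
    -- conditional independence of T and C given X
    (hTC : ∀ s t : ℝ,
      cE μ (sigmaGen X)
          (fun ω => (if s ≤ T ω then (1:ℝ) else 0) * (if t ≤ C ω then (1:ℝ) else 0))
        =ᵐ[μ]
      fun ω =>
        cE μ (sigmaGen X) (fun ω' => if s ≤ T ω' then (1:ℝ) else 0) ω *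
        cE μ (sigmaGen X) (fun ω' => if t ≤ C ω' then (1:ℝ) else 0) ω)
    -- the conditional survival of T given X depends on X only through βᵀX
    (S : ℝ → (Fin d → ℝ) → ℝ) (hSmeas : Measurable (Function.uncurry S))
    (hS : ∀ t : ℝ,
      cE μ (sigmaGen X) (fun ω => if t ≤ T ω then (1:ℝ) else 0)
        =ᵐ[μ] fun ω => S t (V ω))
    -- an integrable subvector component of X
    (Xl : Ω → ℝ) (hXlmeas : Measurable[sigmaGen X] Xl) (hXlint : Integrable Xl μ) :
    ∀ t : ℝ,
      (cE μ (sigmaGen V)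
          (fun ω => Xl ω * (if t ≤ T ω then (1:ℝ) else 0) * (if t ≤ C ω then (1:ℝ) else 0))
        =ᵐ[μ]
       fun ω => S t (V ω) *
         cE μ (sigmaGen V)
           (fun ω' => Xl ω' * cE μ (sigmaGen X) (fun ω'' => if t ≤ C ω'' then (1:ℝ) else 0) ω')
           ω)
      ∧
      (cE μ (sigmaGen V)
          (fun ω => (if t ≤ T ω then (1:ℝ) else 0) * (if t ≤ C ω then (1:ℝ) else 0))
        =ᵐ[μ]
       fun ω => S t (V ω) *
         cE μ (sigmaGen V)
           (fun ω' => cE μ (sigmaGen X) (fun ω'' => if t ≤ C ω'' then (1:ℝ) else 0) ω')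
           ω) :=
  condexp_factorization_through_index_general μ X T C β hX hT hC V hV hTC S hSmeas hS Xl hXlmeas
    hXlint
end

section
/- Let (T, C, X) be random with T ⊥ C | X, P(T ≥ t | X) = S(t, βᵀX) a measurable function of βᵀX, S_c(t, X) = P(C ≥ t | X), Z = min(T, C), Y(t) = I(Z ≥ t), and let X_l be an integrable subvector of X. Then for every t with E{Y(t) | βᵀX} > 0 almost surely, E{ X_l Y(t) | βᵀX } / E{ Y(t) | βᵀX } = E{ X_l S_c(t, X) | βᵀX } / E{ S_c(t, X) | βᵀX } almost surely. -/
open MeasureTheory Set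

/-- With `T ⊥ C | X`, `P(T ≥ t | X) = S(t, βᵀX)` a measurable function of
`βᵀX`, `S_c(t, X) = P(C ≥ t | X)`, `Z = min(T, C)`, `Y(t) = I(Z ≥ t)`, and `X_l` an integrable
(σ(X)-measurable) subvector component of `X`, for every `t` with `E{Y(t) | βᵀX} > 0` a.s.:
`E{X_l Y(t) | βᵀX} / E{Y(t) | βᵀX} = E{X_l S_c(t, X) | βᵀX} / E{S_c(t, X) | βᵀX}` a.s. -/
theorem condexp_ratio_identity
    {Ω : Type*} [MeasurableSpace Ω] (μ : Measure Ω) [IsProbabilityMeasure μ]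
    {p d : ℕ} (X : Ω → Fin p → ℝ) (T C : Ω → ℝ)
    (β : Matrix (Fin p) (Fin d) ℝ)
    (hX : Measurable X) (hT : Measurable T) (hC : Measurable C)
    (hTnn : ∀ ω, 0 ≤ T ω) (hCnn : ∀ ω, 0 ≤ C ω)
    -- the index V = βᵀX
    (V : Ω → Fin d → ℝ) (hV : ∀ ω, V ω = Matrix.vecMul (X ω) β)
    (hVmeas : Measurable V)
    -- conditional independence of T and C given X
    (hTC : ∀ s t : ℝ,
      cE μ (sigmaGen X)
          (fun ω => (if s ≤ T ω then (1:ℝ) else 0) * (if t ≤ C ω then (1:ℝ) else 0))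
        =ᵐ[μ]
      fun ω =>
        cE μ (sigmaGen X) (fun ω' => if s ≤ T ω' then (1:ℝ) else 0) ω *
        cE μ (sigmaGen X) (fun ω' => if t ≤ C ω' then (1:ℝ) else 0) ω)
    -- the conditional survival of T given X depends on X only through βᵀX
    (S : ℝ → (Fin d → ℝ) → ℝ) (hSmeas : Measurable (Function.uncurry S))
    (hS : ∀ t : ℝ,
      cE μ (sigmaGen X) (fun ω => if t ≤ T ω then (1:ℝ) else 0)
        =ᵐ[μ] fun ω => S t (V ω))
    -- an integrable subvector component of X
    (Xl : Ω → ℝ) (hXlmeas : Measurable[sigmaGen X] Xl) (hXlint : Integrable Xl μ) :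
    ∀ t : ℝ,
      -- positivity of E{Y(t) | βᵀX}, where Y(t) = I(Z ≥ t) with Z = min(T, C)
      (∀ᵐ ω ∂μ,
        0 < cE μ (sigmaGen V) (fun ω' => if t ≤ min (T ω') (C ω') then (1:ℝ) else 0) ω) →
      ((fun ω =>
          cE μ (sigmaGen V)
              (fun ω' => Xl ω' * (if t ≤ min (T ω') (C ω') then (1:ℝ) else 0)) ω /
          cE μ (sigmaGen V)
              (fun ω' => if t ≤ min (T ω') (C ω') then (1:ℝ) else 0) ω)
        =ᵐ[μ]
       (fun ω =>
          cE μ (sigmaGen V)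
              (fun ω' => Xl ω' *
                cE μ (sigmaGen X) (fun ω'' => if t ≤ C ω'' then (1:ℝ) else 0) ω') ω /
          cE μ (sigmaGen V)
              (fun ω' =>
                cE μ (sigmaGen X) (fun ω'' => if t ≤ C ω'' then (1:ℝ) else 0) ω') ω)) := by
  intro t hpos
  simp only [cE] at *
  have hmX : sigmaGen X ≤ ‹MeasurableSpace Ω› := hX.comap_le
  -- V is measurable w.r.t. (sigmaGen V)
  have hVmV : Measurable[(sigmaGen V)] V := fun s hs => ⟨s, hs, rfl⟩
  -- (sigmaGen V) ≤ (sigmaGen X)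
  have hg : Measurable (fun y : Fin p → ℝ => Matrix.vecMul y β) := by
    apply measurable_pi_lambda
    intro j
    simp only [Matrix.vecMul, dotProduct]
    exact Finset.measurable_sum _ fun i _ => (measurable_pi_apply i).mul measurable_const
  have hmVX : (sigmaGen V) ≤ (sigmaGen X) := by
    rintro s ⟨u, hu, rfl⟩
    refine ⟨(fun y => Matrix.vecMul y β) ⁻¹' u, hg hu, ?_⟩
    ext ω
    simp [hV ω]
  -- indicator functions
  set IT : Ω → ℝ := fun ω => if t ≤ T ω then (1:ℝ) else 0 with hITdef
  set IC : Ω → ℝ := fun ω => if t ≤ C ω then (1:ℝ) else 0 with hICdef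
  set Y : Ω → ℝ := fun ω => if t ≤ min (T ω) (C ω) then (1:ℝ) else 0 with hYdef
  have hYeq : Y = fun ω => IT ω * IC ω := by
    funext ω
    simp only [hYdef, hITdef, hICdef, le_min_iff]
    by_cases h1 : t ≤ T ω <;> by_cases h2 : t ≤ C ω <;> simp [h1, h2]
  have hindInt : ∀ (f : Ω → ℝ), Measurable f →
      Integrable (fun ω => if t ≤ f ω then (1:ℝ) else 0) μ := by
    intro f hf
    have : (fun ω => if t ≤ f ω then (1:ℝ) else 0)
        = Set.indicator {ω | t ≤ f ω} (fun _ => (1:ℝ)) := by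
      funext ω; simp [Set.indicator_apply, Set.mem_setOf_eq]
    rw [this]
    exact (integrable_const (1:ℝ)).indicator (measurableSet_le measurable_const hf)
  have hITint : Integrable IT μ := hindInt T hT
  have hICint : Integrable IC μ := hindInt C hC
  have hYint : Integrable Y μ := hindInt _ (hT.min hC)
  -- S t ∘ V measurability
  have hSt : Measurable (S t) := hSmeas.of_uncurry_left
  have hfmV : StronglyMeasurable[(sigmaGen V)] (fun ω => S t (V ω)) :=
    (hSt.comp hVmV).stronglyMeasurable
  have hXlm : Measurable Xl := hXlmeas.mono hmX le_rfl
  -- Sc := μ[IC | (sigmaGen X)]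
  set Sc : Ω → ℝ := μ[IC | (sigmaGen X)] with hScdef
  have hScint : Integrable Sc μ := integrable_condExp
  have hScbd : ∀ᵐ ω ∂μ, |Sc ω| ≤ 1 := by
    have h0 : (0:Ω → ℝ) ≤ᵐ[μ] Sc :=
      condExp_nonneg (Filter.Eventually.of_forall fun ω => by
        simp only [hICdef]; positivity)
    have h1 : Sc ≤ᵐ[μ] μ[(fun _ => (1:ℝ)) | (sigmaGen X)] :=
      condExp_mono hICint (integrable_const 1)
        (Filter.Eventually.of_forall fun ω => by
          simp only [hICdef]; split <;> norm_num)
    have h1' : μ[(fun _ => (1:ℝ)) | (sigmaGen X)] = fun _ => (1:ℝ) := condExp_const hmX 1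
    filter_upwards [h0, h1] with ω hω0 hω1
    rw [h1'] at hω1
    simp only [Pi.zero_apply] at hω0
    rw [abs_le]
    exact ⟨by linarith, hω1⟩
  -- μ[Y|(sigmaGen X)] =ᵐ (S t ∘ V) * Sc
  have hYX : μ[Y | (sigmaGen X)] =ᵐ[μ] fun ω => S t (V ω) * Sc ω := by
    have h1 : μ[Y | (sigmaGen X)] =ᵐ[μ] fun ω => (μ[IT | (sigmaGen X)]) ω * (μ[IC | (sigmaGen X)]) ω := by
      rw [hYeq]; exact hTC t t
    refine h1.trans ?_
    filter_upwards [hS t] with ω hω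
    rw [hω]
  -- Denominator identity
  have hfScInt : Integrable ((fun ω => S t (V ω)) * Sc) μ :=
    integrable_condExp.congr hYX
  have hDen : μ[Y | (sigmaGen V)] =ᵐ[μ] fun ω => S t (V ω) * (μ[Sc | (sigmaGen V)]) ω := by
    have h1 : μ[Y | (sigmaGen V)] =ᵐ[μ] μ[μ[Y | (sigmaGen X)] | (sigmaGen V)] := (condExp_condExp_of_le hmVX hmX).symm
    have h2 : μ[μ[Y | (sigmaGen X)] | (sigmaGen V)] =ᵐ[μ] μ[(fun ω => S t (V ω)) * Sc | (sigmaGen V)] :=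
      condExp_congr_ae hYX
    have h3 := condExp_mul_of_stronglyMeasurable_left (m := (sigmaGen V)) hfmV hfScInt hScint
    exact (h1.trans (h2.trans h3))
  -- Numerator
  have hYmeas : Measurable Y := by
    refine Measurable.ite (measurableSet_le measurable_const (hT.min hC)) ?_ ?_ <;>
      exact measurable_const
  have hXlYint : Integrable (fun ω => Xl ω * Y ω) μ := by
    refine hXlint.mono (hXlm.mul hYmeas).aestronglyMeasurable ?_
    refine Filter.Eventually.of_forall fun ω => ?_
    have : |Y ω| ≤ 1 := by simp only [hYdef]; split <;> norm_num
    calc ‖Xl ω * Y ω‖ = |Xl ω| * |Y ω| := by rw [norm_mul]; rfl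
      _ ≤ |Xl ω| * 1 := by nlinarith [abs_nonneg (Xl ω)]
      _ = ‖Xl ω‖ := by simp
  -- pull Xl out of μ[·|(sigmaGen X)]
  have hXlYX : μ[(fun ω => Xl ω * Y ω) | (sigmaGen X)] =ᵐ[μ] fun ω => Xl ω * (μ[Y | (sigmaGen X)]) ω := by
    have := condExp_mul_of_stronglyMeasurable_left (m := (sigmaGen X))
      hXlmeas.stronglyMeasurable (g := Y) hXlYint hYint
    exact this
  have hNumX : μ[(fun ω => Xl ω * Y ω) | (sigmaGen X)] =ᵐ[μ]
      fun ω => S t (V ω) * (Xl ω * Sc ω) := by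
    filter_upwards [hXlYX, hYX] with ω h1 h2
    rw [h1, h2]; ring
  have hXlScInt : Integrable (fun ω => Xl ω * Sc ω) μ := by
    refine hXlint.mono
      (hXlm.mul (stronglyMeasurable_condExp.mono hmX).measurable).aestronglyMeasurable ?_
    filter_upwards [hScbd] with ω hω
    calc ‖Xl ω * Sc ω‖ = |Xl ω| * |Sc ω| := by rw [norm_mul]; rfl
      _ ≤ |Xl ω| * 1 := by nlinarith [abs_nonneg (Xl ω)]
      _ = ‖Xl ω‖ := by simp
  have hfXlScInt : Integrable ((fun ω => S t (V ω)) * fun ω => Xl ω * Sc ω) μ :=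
    integrable_condExp.congr hNumX
  have hNum : μ[(fun ω => Xl ω * Y ω) | (sigmaGen V)] =ᵐ[μ]
      fun ω => S t (V ω) * (μ[(fun ω => Xl ω * Sc ω) | (sigmaGen V)]) ω := by
    have h1 : μ[(fun ω => Xl ω * Y ω) | (sigmaGen V)] =ᵐ[μ] μ[μ[(fun ω => Xl ω * Y ω) | (sigmaGen X)] | (sigmaGen V)] :=
      (condExp_condExp_of_le hmVX hmX).symm
    have h2 : μ[μ[(fun ω => Xl ω * Y ω) | (sigmaGen X)] | (sigmaGen V)] =ᵐ[μ]
        μ[(fun ω => S t (V ω)) * (fun ω => Xl ω * Sc ω) | (sigmaGen V)] :=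
      condExp_congr_ae hNumX
    have h3 := condExp_mul_of_stronglyMeasurable_left (m := (sigmaGen V)) hfmV hfXlScInt hXlScInt
    exact h1.trans (h2.trans h3)
  -- conclude
  have hEqNum : (fun ω' => Xl ω' * (if t ≤ min (T ω') (C ω') then (1:ℝ) else 0))
      = fun ω' => Xl ω' * Y ω' := rfl
  rw [hEqNum]
  filter_upwards [hpos, hNum, hDen] with ω h0 h1 h2
  rw [h1, h2]
  rw [h2] at h0
  have hf : S t (V ω) ≠ 0 := by
    intro h
    rw [h, zero_mul] at h0
    exact lt_irrefl 0 h0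
  exact mul_div_mul_left _ _ hf
end
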